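/- arXiv:2112.02533 — 2 statements merged into one kernel-verified Lean document; each statement's English description precedes it below -/
import Mathlib

section
/- For all n ≥ 0, the partial sum S_n = Σ_{k=0}^{n} W_k of the Horadam sequence satisfies S_n = (a - pa + b)/(1-p-q) - ((2qa - pqa + 2qb + pb)/(2(1-p-q)))*F_n - ((qa + b)/(2(1-p-q)))*L_n. -/
theorem stmt_6 (p q a b : ℝ) (hpq : p + q ≠ 1)
    (W : ℕ → ℝ) (hW0 : W 0 = a) (hW1 : W 1 = b)
    (hW : ∀ n, W (n + 2) = p * W (n + 1) + q * W n)
    (F : ℕ → ℝ) (hF0 : F 0 = 0) (hF1 : F 1 = 1)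
    (hF : ∀ n, F (n + 2) = p * F (n + 1) + q * F n)
    (L : ℕ → ℝ) (hL0 : L 0 = 2) (hL1 : L 1 = p)
    (hL : ∀ n, L (n + 2) = p * L (n + 1) + q * L n) :
    ∀ n, ∑ k ∈ Finset.range (n + 1), W k
      = (a - p * a + b) / (1 - p - q)
        - ((2 * q * a - p * q * a + 2 * q * b + p * b) / (2 * (1 - p - q))) * F n
        - ((q * a + b) / (2 * (1 - p - q))) * L n := by
  have hD : 1 - p - q ≠ 0 := fun h => hpq (by linarith)
  have hLF : ∀ n, L n = 2 * F (n + 1) - p * F n := by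
    intro n
    induction n using Nat.twoStepInduction with
    | zero => rw [hL0, hF1, hF0]; ring
    | one => rw [hL1, hF (0), hF1, hF0]; ring
    | more n ih1 ih2 => rw [hL n, ih1, ih2, hF (n + 1), hF n]; ring
  have hWF : ∀ n, W (n + 1) = b * F (n + 1) + q * a * F n := by
    intro n
    induction n using Nat.twoStepInduction with
    | zero => rw [hW1, hF1, hF0]; ring
    | one => rw [hW 0, hW1, hW0, hF 0, hF1, hF0]; ring
    | more n ih1 ih2 => rw [hW (n + 1), ih1, ih2, hF (n + 1), hF n]; ring
  intro n
  induction n with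
  | zero =>
    rw [Finset.sum_range_one, hW0, hF0, hL0]
    field_simp
    ring
  | succ n ih =>
    rw [Finset.sum_range_succ, ih, hWF n, hLF n, hLF (n + 1), hF n]
    field_simp
    ring
end

section
/- For all n ≥ 1 and m ≥ 0, Σ_{k=n}^{n+m} W_k = -((2qa - pqa + 2qb + pb)/(2(1-p-q)))*(F_{n+m} - F_{n-1}) - ((qa + b)/(2(1-p-q)))*(L_{n+m} - L_{n-1}). -/
theorem stmt_7 (p q a b : ℝ) (hpq : p + q ≠ 1)
    (W : ℕ → ℝ) (hW0 : W 0 = a) (hW1 : W 1 = b)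
    (hW : ∀ n, W (n + 2) = p * W (n + 1) + q * W n)
    (F : ℕ → ℝ) (hF0 : F 0 = 0) (hF1 : F 1 = 1)
    (hF : ∀ n, F (n + 2) = p * F (n + 1) + q * F n)
    (L : ℕ → ℝ) (hL0 : L 0 = 2) (hL1 : L 1 = p)
    (hL : ∀ n, L (n + 2) = p * L (n + 1) + q * L n) :
    ∀ n m : ℕ, 1 ≤ n →
      ∑ k ∈ Finset.Icc n (n + m), W k
        = -((2 * q * a - p * q * a + 2 * q * b + p * b) / (2 * (1 - p - q)))
            * (F (n + m) - F (n - 1))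
          - ((q * a + b) / (2 * (1 - p - q))) * (L (n + m) - L (n - 1)) := by
  set A : ℝ := -((2 * q * a - p * q * a + 2 * q * b + p * b) / (2 * (1 - p - q))) with hA
  set B : ℝ := -((q * a + b) / (2 * (1 - p - q))) with hB
  have hden : (2 : ℝ) * (1 - p - q) ≠ 0 := by
    intro h
    apply hpq
    have : (1 : ℝ) - p - q = 0 := by linarith [mul_eq_zero.mp h]
    linarith
  have hden' : (1 : ℝ) - p - q ≠ 0 := fun h => hden (by rw [h]; ring)
  have hden'' : (1 : ℝ) - q - p ≠ 0 := fun h => hden' (by linarith)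
  have key : ∀ j : ℕ, W (j + 1) = A * (F (j + 1) - F j) + B * (L (j + 1) - L j) := by
    have step : ∀ j : ℕ,
        (W (j + 1) = A * (F (j + 1) - F j) + B * (L (j + 1) - L j)) ∧
        (W (j + 2) = A * (F (j + 2) - F (j + 1)) + B * (L (j + 2) - L (j + 1))) := by
      intro j
      induction j with
      | zero =>
        constructor
        · rw [hW1, hF1, hF0, hL1, hL0, hA, hB]
          field_simp
          ring
        · rw [hW 0, hW1, hW0, hF 0, hF1, hF0, hL 0, hL1, hL0, hA, hB]
          field_simp
          ring
      | succ k ih =>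
        refine ⟨ih.2, ?_⟩
        rw [hW (k + 1), hF (k + 1), hL (k + 1), ih.1, ih.2, hF k, hL k]
        ring
    exact fun j => (step j).1
  intro n m hn
  obtain ⟨n', rfl⟩ : ∃ n', n = n' + 1 := ⟨n - 1, (Nat.succ_pred_eq_of_pos hn).symm⟩
  simp only [Nat.add_sub_cancel]
  induction m with
  | zero =>
    simp only [Nat.add_zero, Finset.Icc_self, Finset.sum_singleton]
    rw [key n']
    ring
  | succ m ih =>
    rw [show n' + 1 + (m + 1) = (n' + 1 + m) + 1 from rfl,
      Finset.sum_Icc_succ_top (by omega : n' + 1 ≤ n' + 1 + m + 1)]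
    rw [ih, show n' + 1 + m + 1 = (n' + m + 1) + 1 by omega, key (n' + m + 1)]
    rw [hB]
    ring
end
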